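/- arXiv:1509.03429 — 3 statements merged into one kernel-verified Lean document; each statement's English description precedes it below -/
import Mathlib

section
/- Let u_1, ..., u_m be distinct real numbers and c_1, ..., c_m complex numbers. Then the sum of |c_j|^2 over j is at most the limsup as s tends to infinity of |sum_j c_j exp(i u_j s)|^2. -/
/-!
Averaging `|g|²` over `[0, T]` kills every cross term `c_j c̄_k e^{i (u_j - u_k) s}` with `j ≠ k`,
since the frequencies are distinct, so the Cesàro means of `|g|²` tend to `∑ |c_j|²`. On the other
hand `|g|²` is bounded, and the Cesàro means of a function bounded above are asymptotically at most
its limsup.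
-/

open Filter MeasureTheory Complex ComplexConjugate Topology

section CesaroMean

variable {f : ℝ → ℝ} {a : ℝ}

theorem le_of_tendsto_average_of_eventually_le (hf : ∀ T, IntervalIntegrable f volume 0 T)
    (ha : Tendsto (fun T => T⁻¹ * ∫ s in 0..T, f s) atTop (𝓝 a)) {b : ℝ}
    (hb : ∀ᶠ s in atTop, f s ≤ b) : a ≤ b := by
  obtain ⟨s₀, hs₀⟩ := eventually_atTop.mp hb
  set C := ∫ s in 0..s₀, f s
  have hbound : ∀ᶠ T in atTop, T⁻¹ * ∫ s in 0..T, f s ≤ b + T⁻¹ * (C - s₀ * b) := by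
    filter_upwards [eventually_ge_atTop s₀, eventually_gt_atTop 0] with T hT hT0
    have hf_tail : IntervalIntegrable f volume s₀ T := (hf s₀).symm.trans (hf T)
    have htail : ∫ s in s₀..T, f s ≤ (T - s₀) * b := by
      simpa using intervalIntegral.integral_mono_on hT hf_tail intervalIntegrable_const
        fun s hs => hs₀ s hs.1
    rw [← intervalIntegral.integral_add_adjacent_intervals (hf s₀) hf_tail]
    calc T⁻¹ * (C + ∫ s in s₀..T, f s) ≤ T⁻¹ * (C + (T - s₀) * b) := by gcongr
      _ = b + T⁻¹ * (C - s₀ * b) := by field_simp; ring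
  have hlim : Tendsto (fun T : ℝ => b + T⁻¹ * (C - s₀ * b)) atTop (𝓝 b) := by
    simpa using (tendsto_inv_atTop_zero.mul_const (C - s₀ * b)).const_add b
  exact le_of_tendsto_of_tendsto ha hlim hbound

theorem le_limsup_of_tendsto_average (hf : ∀ T, IntervalIntegrable f volume 0 T)
    (hbdd : IsBoundedUnder (· ≤ ·) atTop f)
    (ha : Tendsto (fun T => T⁻¹ * ∫ s in 0..T, f s) atTop (𝓝 a)) :
    a ≤ limsup f atTop :=
  le_of_forall_gt_imp_ge_of_dense fun _ hb =>
    le_of_tendsto_average_of_eventually_le hf ha ((eventually_lt_of_limsup_lt hb hbdd).mono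
      fun _ => le_of_lt)

end CesaroMean

theorem norm_integral_exp_I_mul_le {a : ℝ} (ha : a ≠ 0) (T : ℝ) :
    ‖∫ s in 0..T, exp (I * (a * s))‖ ≤ 2 / ‖I * a‖ := by
  have hIa : I * a ≠ 0 := mul_ne_zero I_ne_zero (ofReal_ne_zero.mpr ha)
  have hexp : ∀ x : ℝ, ‖exp (I * a * x)‖ = 1 := fun x => by
    simpa [mul_assoc] using norm_exp_I_mul_ofReal (a * x)
  simp_rw [← mul_assoc, integral_exp_mul_complex hIa, norm_div]
  gcongr
  calc ‖exp (I * a * T) - exp (I * a * (0 : ℝ))‖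
      ≤ ‖exp (I * a * T)‖ + ‖exp (I * a * (0 : ℝ))‖ := norm_sub_le _ _
    _ = 2 := by rw [hexp, hexp]; norm_num

theorem tendsto_average_exp_I_mul (a : ℝ) :
    Tendsto (fun T : ℝ => (T : ℂ)⁻¹ * ∫ s in 0..T, exp (I * (a * s))) atTop
      (𝓝 (if a = 0 then 1 else 0)) := by
  split_ifs with ha
  · refine tendsto_const_nhds.congr' ?_
    filter_upwards [eventually_ne_atTop 0] with T hT
    simp [ha, hT]
  · have hdecay : Tendsto (fun T : ℝ => |T|⁻¹ * (2 / ‖I * a‖)) atTop (𝓝 0) := by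
      simpa using (tendsto_inv_atTop_zero.comp tendsto_abs_atTop_atTop).mul_const (2 / ‖I * a‖)
    refine squeeze_zero_norm (fun T => ?_) hdecay
    simpa using mul_le_mul_of_nonneg_left (norm_integral_exp_I_mul_le ha T) (by positivity)

section TrigSum

variable {ι : Type*} [Fintype ι] (u : ι → ℝ) (c : ι → ℂ)

noncomputable def trigSum (s : ℝ) : ℂ := ∑ j, c j * exp (I * (u j * s))

theorem continuous_trigSum : Continuous (trigSum u c) := by
  unfold trigSum; fun_prop

theorem norm_trigSum_le (s : ℝ) : ‖trigSum u c s‖ ≤ ∑ j, ‖c j‖ :=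
  (norm_sum_le _ _).trans_eq <| Finset.sum_congr rfl fun j _ => by
    rw [norm_mul, ← ofReal_mul, norm_exp_I_mul_ofReal, mul_one]

theorem ofReal_norm_trigSum_sq (s : ℝ) :
    ((‖trigSum u c s‖ ^ 2 : ℝ) : ℂ) =
      ∑ j, ∑ k, c j * conj (c k) * exp (I * ((u j - u k) * s)) := by
  rw [ofReal_pow, ← mul_conj', trigSum, map_sum, Finset.sum_mul_sum]
  refine Finset.sum_congr rfl fun j _ => Finset.sum_congr rfl fun k _ => ?_
  have hconj : conj (exp (I * (u k * s))) = exp (-(I * (u k * s))) := by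
    rw [← exp_conj]; simp [conj_ofReal]
  rw [map_mul, hconj, mul_mul_mul_comm, ← exp_add]
  ring_nf

theorem tendsto_average_norm_trigSum_sq (hu : Function.Injective u) :
    Tendsto (fun T => T⁻¹ * ∫ s in 0..T, ‖trigSum u c s‖ ^ 2) atTop (𝓝 (∑ j, ‖c j‖ ^ 2)) := by
  classical
  have hcont : ∀ j k,
      Continuous fun s : ℝ => c j * conj (c k) * exp (I * ((u j - u k) * s)) := by
    intro j k; fun_prop
  have hcross : ∀ j k, Tendsto (fun T : ℝ => (T : ℂ)⁻¹ *
      ∫ s in 0..T, c j * conj (c k) * exp (I * ((u j - u k) * s))) atTop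
      (𝓝 (if j = k then (‖c j‖ ^ 2 : ℂ) else 0)) := fun j k => by
    have h := (tendsto_average_exp_I_mul (u j - u k)).const_mul (c j * conj (c k))
    simp only [sub_eq_zero, hu.eq_iff, ofReal_sub] at h
    convert h using 2 with T
    · rw [intervalIntegral.integral_const_mul, mul_left_comm]
    · split_ifs with hjk <;> simp [hjk, mul_conj']
  have hsum := tendsto_finsetSum Finset.univ fun j _ => tendsto_finsetSum Finset.univ
    fun k _ => hcross j k
  simp only [Finset.sum_ite_eq, Finset.mem_univ, if_true] at hsum
  rw [← tendsto_ofReal_iff]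
  push_cast
  refine hsum.congr fun T => ?_
  rw [← intervalIntegral.integral_ofReal]
  simp only [ofReal_norm_trigSum_sq]
  rw [intervalIntegral.integral_finsetSum fun j _ =>
      (continuous_finsetSum _ fun k _ => hcont j k).intervalIntegrable 0 T, Finset.mul_sum]
  refine Finset.sum_congr rfl fun j _ => ?_
  rw [intervalIntegral.integral_finsetSum fun k _ => (hcont j k).intervalIntegrable 0 T,
    Finset.mul_sum]

end TrigSum

/-- Oscillation lemma (Wallach): for distinct real frequencies `u j` and complex
coefficients `c j`, the sum of `|c j|²` is at most the limsup as `s → ∞` of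
`|Σ_j c_j e^{i u_j s}|²`. -/
theorem stmt0 (m : ℕ) (u : Fin m → ℝ) (hu : Function.Injective u) (c : Fin m → ℂ) :
    ∑ j, ‖c j‖ ^ 2 ≤
      Filter.limsup (fun s : ℝ =>
        ‖∑ j, c j * Complex.exp (Complex.I * (u j * s))‖ ^ 2) Filter.atTop := by
  have hcont : Continuous fun s => ‖trigSum u c s‖ ^ 2 := (continuous_trigSum u c).norm.pow 2
  have hbdd : IsBoundedUnder (· ≤ ·) atTop fun s => ‖trigSum u c s‖ ^ 2 :=
    isBoundedUnder_of ⟨(∑ j, ‖c j‖) ^ 2, fun s => by gcongr; exact norm_trigSum_le u c s⟩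
  exact le_limsup_of_tendsto_average (fun T => hcont.intervalIntegrable 0 T) hbdd
    (tendsto_average_norm_trigSum_sq u c hu)
end

section
/- Let u_1, ..., u_m be distinct real numbers and c_1, ..., c_m complex numbers, not all zero. Then there exist constants C > 0 and ε > 0 and a sequence t_1 < t_2 < ... tending to infinity such that |Σ_j c_j e^{i u_j t}| ≥ C for all t with |t - t_n| < ε for some n. -/
/-! A sum `g t = ∑ c_j e^{i u_j t}` with distinct frequencies tends to `0` at infinity only if all
`c_j` vanish: for a shift `σ` with `e^{i u_j σ} ≠ e^{i u_a σ}` for all `j ≠ a` (all but countably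
many `σ` qualify), `g (t + σ) - e^{i u_a σ} g t` is a sum of the same kind without the frequency
`u_a`, so induction on the number of frequencies applies. Hence `δ ≤ ‖g‖` at arbitrarily large
times, and since `g` is Lipschitz, `δ / 2 ≤ ‖g‖` on intervals of a fixed length around them. -/

open Complex Filter Finset Topology

theorem Filter.Frequently.exists_strictMono_tendsto_atTop {α : Type*} [LinearOrder α]
    [NoMaxOrder α] [(atTop : Filter α).IsCountablyGenerated] {p : α → Prop}
    (h : ∃ᶠ x in atTop, p x) :
    ∃ t : ℕ → α, StrictMono t ∧ Tendsto t atTop atTop ∧ ∀ n, p (t n) := by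
  obtain ⟨t, htend, hp⟩ := exists_seq_forall_of_frequently h
  obtain ⟨φ, hφ, hmono⟩ := strictMono_subseq_of_tendsto_atTop htend
  exact ⟨t ∘ φ, hmono, htend.comp hφ.tendsto_atTop, fun n => hp (φ n)⟩

theorem exists_pos_frequently_le_norm_of_not_tendsto_zero {α E : Type*} [SeminormedAddGroup E]
    {l : Filter α} {f : α → E} (h : ¬Tendsto f l (𝓝 0)) :
    ∃ δ > 0, ∃ᶠ x in l, δ ≤ ‖f x‖ := by
  simpa [Metric.tendsto_nhds, dist_zero_right, not_eventually] using h

theorem UniformContinuous.exists_pos_forall_dist_lt_half_le_norm {α E : Type*}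
    [PseudoMetricSpace α] [SeminormedAddCommGroup E] {f : α → E} (hf : UniformContinuous f)
    {δ : ℝ} (hδ : 0 < δ) :
    ∃ ε > 0, ∀ x y, δ ≤ ‖f x‖ → dist y x < ε → δ / 2 ≤ ‖f y‖ := by
  obtain ⟨ε, hε, hclose⟩ := Metric.uniformContinuous_iff.mp hf (δ / 2) (half_pos hδ)
  refine ⟨ε, hε, fun x y hx hyx => ?_⟩
  have := norm_sub_norm_le (f x) (f y)
  rw [← dist_eq_norm, dist_comm] at this
  linarith [hclose hyx]

theorem norm_cexp_I_mul_sub_le (a b : ℝ) : ‖cexp (I * a) - cexp (I * b)‖ ≤ |a - b| := by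
  have h : cexp (I * a) - cexp (I * b) = cexp (I * b) * (cexp (I * ↑(a - b)) - 1) := by
    rw [mul_sub, ← Complex.exp_add]; push_cast; ring_nf
  rw [h, norm_mul, norm_exp_I_mul_ofReal, one_mul]
  exact Real.norm_exp_I_mul_ofReal_sub_one_le

noncomputable def expSum {ι : Type*} (s : Finset ι) (u : ι → ℝ) (c : ι → ℂ) (t : ℝ) : ℂ :=
  ∑ j ∈ s, c j * cexp (I * (u j * t))

section expSum

variable {ι : Type*} (s : Finset ι) (u : ι → ℝ) (c : ι → ℂ)

theorem lipschitzWith_expSum : LipschitzWith (∑ j ∈ s, ‖c j‖₊ * ‖u j‖₊) (expSum s u c) := by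
  refine LipschitzWith.of_dist_le_mul fun x y => ?_
  simp only [expSum, dist_eq_norm, ← sum_sub_distrib, NNReal.coe_sum, NNReal.coe_mul,
    coe_nnnorm, sum_mul]
  refine (norm_sum_le _ _).trans (sum_le_sum fun j _ => ?_)
  rw [← mul_sub, norm_mul, mul_assoc]
  gcongr
  simpa [← mul_sub, abs_mul] using norm_cexp_I_mul_sub_le (u j * x) (u j * y)

theorem exists_forall_cexp_I_mul_ne {a : ℝ} (ha : ∀ j ∈ s, u j ≠ a) :
    ∃ σ : ℝ, ∀ j ∈ s, cexp (I * (u j * σ)) ≠ cexp (I * (a * σ)) := by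
  set B : Set ℝ := ⋃ j ∈ s, {σ : ℝ | cexp (I * (u j * σ)) = cexp (I * (a * σ))}
  have hB : B.Countable := by
    refine s.countable_toSet.biUnion fun j hj => ((Set.countable_range
      fun n : ℤ => 2 * Real.pi * n / (u j - a)).mono ?_)
    rintro σ hσ
    obtain ⟨n, hn⟩ := Complex.exp_eq_exp_iff_exists_int.mp hσ
    have hreal : ((u j * σ : ℝ) : ℂ) = ((a * σ + n * (2 * Real.pi) : ℝ) : ℂ) := by
      push_cast
      apply mul_left_cancel₀ I_ne_zero
      rw [hn]; ring
    have hne : u j - a ≠ 0 := sub_ne_zero.mpr (ha j hj)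
    refine ⟨n, ?_⟩
    rw [div_eq_iff hne]
    linarith [Complex.ofReal_injective hreal]
  obtain ⟨σ, hσ⟩ := (hB.dense_compl ℝ).nonempty
  exact ⟨σ, fun j hj heq => hσ (Set.mem_biUnion hj heq)⟩

theorem expSum_add_sub_mul_expSum [DecidableEq ι] (a : ι) (ha : a ∉ s) (σ t : ℝ) :
    expSum (insert a s) u c (t + σ) - cexp (I * (u a * σ)) * expSum (insert a s) u c t =
      expSum s u (fun j => c j * (cexp (I * (u j * σ)) - cexp (I * (u a * σ)))) t := by
  have hexp : ∀ w : ℝ, cexp (I * (w * ↑(t + σ))) = cexp (I * (w * t)) * cexp (I * (w * σ)) :=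
    fun w => by rw [← Complex.exp_add]; push_cast; ring_nf
  simp only [expSum, sum_insert ha, hexp, mul_add, mul_sum]
  rw [add_sub_add_comm, ← sum_sub_distrib, sub_eq_zero_of_eq (by ring), zero_add]
  exact sum_congr rfl fun j _ => by ring

theorem eq_zero_of_tendsto_expSum_zero (hu : Set.InjOn u s)
    (h : Tendsto (expSum s u c) atTop (𝓝 0)) : ∀ j ∈ s, c j = 0 := by
  classical
  induction s using Finset.induction_on generalizing c with
  | empty => simp
  | @insert a s ha ih =>
    obtain ⟨σ, hσ⟩ := exists_forall_cexp_I_mul_ne s u (a := u a) fun j hj hja =>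
      ha (hu (mem_insert_of_mem hj) (mem_insert_self a s) hja ▸ hj)
    have hreduced :
        Tendsto (expSum s u fun j => c j * (cexp (I * (u j * σ)) - cexp (I * (u a * σ))))
          atTop (𝓝 0) := by
      have := (h.comp (tendsto_atTop_add_const_right atTop σ tendsto_id)).sub
        (h.const_mul (cexp (I * (u a * σ))))
      rw [mul_zero, sub_zero] at this
      exact this.congr (expSum_add_sub_mul_expSum s u c a ha σ)
    have hs : ∀ j ∈ s, c j = 0 := fun j hj =>
      (mul_eq_zero.mp (ih _ (hu.mono (coe_subset.mpr (subset_insert a s))) hreduced j hj))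
        |>.resolve_right (sub_ne_zero.mpr (hσ j hj))
    have hca : c a = 0 := by
      have hnorm : ∀ t, ‖expSum (insert a s) u c t‖ = ‖c a‖ := fun t => by
        rw [expSum, sum_insert ha, sum_eq_zero fun j hj => by simp [hs j hj], add_zero, norm_mul,
          ← ofReal_mul, norm_exp_I_mul_ofReal, mul_one]
      have := h.norm
      simp only [hnorm, norm_zero] at this
      exact norm_eq_zero.mp (tendsto_const_nhds_iff.mp this)
    intro j hj
    rcases mem_insert.mp hj with rfl | hj
    exacts [hca, hs j hj]

end expSum

/-- For distinct real frequencies `u j` and complex coefficients `c j`, not all zero,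
there exist `C > 0`, `ε > 0` and a strictly increasing sequence `t n → ∞` such that
`|Σ_j c_j e^{i u_j t}| ≥ C` whenever `|t - t n| < ε` for some `n`. -/
theorem stmt1 (m : ℕ) (u : Fin m → ℝ) (hu : Function.Injective u) (c : Fin m → ℂ)
    (hc : ∃ j, c j ≠ 0) :
    ∃ C > (0:ℝ), ∃ ε > (0:ℝ), ∃ t : ℕ → ℝ, StrictMono t ∧
      Filter.Tendsto t Filter.atTop Filter.atTop ∧
      ∀ n : ℕ, ∀ s : ℝ, |s - t n| < ε →
        C ≤ ‖∑ j, c j * Complex.exp (Complex.I * (u j * s))‖ := by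
  obtain ⟨j, hj⟩ := hc
  have hnot : ¬Tendsto (expSum univ u c) atTop (𝓝 0) := fun h =>
    hj (eq_zero_of_tendsto_expSum_zero univ u c hu.injOn h j (mem_univ j))
  obtain ⟨δ, hδ, hfreq⟩ := exists_pos_frequently_le_norm_of_not_tendsto_zero hnot
  obtain ⟨t, hmono, htend, ht⟩ := hfreq.exists_strictMono_tendsto_atTop
  obtain ⟨ε, hε, hclose⟩ := (lipschitzWith_expSum univ u c).uniformContinuous
    |>.exists_pos_forall_dist_lt_half_le_norm hδ
  exact ⟨δ / 2, half_pos hδ, ε, hε, t, hmono, htend, fun n s hs => hclose _ _ (ht n) hs⟩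
end

section
/- Let Ξ be a finite subset of ℂ, q_ξ complex polynomials, f(t) = Σ_{ξ∈Ξ} e^{ξ t} q_ξ(t), λ = max{Re ξ : q_ξ ≠ 0} and d the maximal degree of q_ξ among ξ with Re ξ = λ. Then there exist C > 0, ε > 0 and a sequence t_1 < t_2 < ... tending to infinity such that |f(t)| ≥ C e^{λ t} t^d for all t ∈ (t_n − ε, t_n + ε) and all n. -/
/-!
After division by `e^{λt} t^d`, the exponential polynomial is `h(t) + o(1)` with
`h(t) = Σ c_ξ e^{i (Im ξ) t}`, the sum over the `ξ` with `Re ξ = λ` and `c_ξ` the coefficient of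
`t^d` in `q_ξ`. By Dedekind's independence of characters, `h(t₀) ≠ 0` for some `t₀`. As `h` factors
through the flow `t ↦ (e^{i (Im ξ) t})_ξ` on a compact torus, and the powers of an element of a
compact group come back arbitrarily close to `1`, there are arbitrarily large integers `n` with
`|h| ≥ |h(t₀)| / 2` on a window of fixed width around `t₀ + n`.
-/

open Filter Topology Polynomial Asymptotics

section CompactGroup

variable {G : Type*} [Group G] [TopologicalSpace G] [IsTopologicalGroup G] [CompactSpace G]

theorem frequently_pow_mem_of_mem_nhds_one (g : G) {U : Set G} (hU : U ∈ 𝓝 1) :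
    ∃ᶠ n : ℕ in atTop, g ^ n ∈ U := by
  obtain ⟨a, -, ha⟩ :=
    isCompact_univ.exists_mapClusterPt (f := atTop) (u := (g ^ · : ℕ → G)) (by simp)
  -- two returns of `g ^ n` near `a` differ by a power of `g` close to `1`
  have hdiv : Tendsto (fun p : G × G => p.1⁻¹ * p.2) (𝓝 a ×ˢ 𝓝 a) (𝓝 1) := by
    rw [← nhds_prod_eq, ← inv_mul_cancel a]
    exact (continuous_fst.inv.mul continuous_snd).tendsto (a, a)
  obtain ⟨W, hW, hWU⟩ := eventually_prod_self_iff'.mp (hdiv.eventually_mem hU)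
  have hfreq := mapClusterPt_iff_frequently.mp ha W hW
  rw [frequently_atTop] at hfreq ⊢
  intro N
  obtain ⟨m, -, hm⟩ := hfreq 0
  obtain ⟨k, hk, hkW⟩ := hfreq (m + N)
  refine ⟨k - m, by omega, ?_⟩
  have hpow : g ^ (k - m) = (g ^ m)⁻¹ * g ^ k := by
    rw [eq_inv_mul_iff_mul_eq, ← pow_add, Nat.add_sub_cancel' (by omega)]
  simpa [hpow] using hWU _ hm _ hkW

theorem AddChar.frequently_forall_mem_of_mem_nhds (γ : AddChar ℝ G) (hγ : Continuous γ)
    (t₀ : ℝ) {U : Set G} (hU : U ∈ 𝓝 (γ t₀)) :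
    ∃ ε > 0, ∃ᶠ n : ℕ in atTop, ∀ t, |t - (t₀ + n)| < ε → γ t ∈ U := by
  have hU₁ : (γ t₀ * ·) ⁻¹' U ∈ 𝓝 1 :=
    (continuous_const_mul (γ t₀)).continuousAt.preimage_mem_nhds (by simpa using hU)
  obtain ⟨V, hV, hVU⟩ := exists_nhds_one_split hU₁
  have hγ₀ : Tendsto γ (𝓝 0) (𝓝 1) := by simpa using hγ.tendsto 0
  obtain ⟨ε, hε, hball⟩ := Metric.mem_nhds_iff.mp (hγ₀ hV)
  refine ⟨ε, hε, (frequently_pow_mem_of_mem_nhds_one (γ 1) hV).mono fun n hn t ht => ?_⟩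
  have hsplit : γ t = γ t₀ * (γ 1 ^ n * γ (t - (t₀ + n))) := by
    rw [← AddChar.map_nsmul_eq_pow, ← AddChar.map_add_eq_mul, ← AddChar.map_add_eq_mul,
      nsmul_one]
    congr 1
    ring
  exact hsplit ▸ hVU _ hn _ (hball (by simpa [Real.dist_eq] using ht))

end CompactGroup

theorem Circle.eq_of_forall_exp_mul_eq {u v : ℝ}
    (h : ∀ t, Circle.exp (u * t) = Circle.exp (v * t)) : u = v := by
  by_contra huv
  have := h (Real.pi / (u - v))
  rw [← div_eq_one, ← Circle.exp_sub, ← sub_mul, mul_div_cancel₀ _ (sub_ne_zero.mpr huv)]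
    at this
  exact Circle.exp_pi_ne_one this

section TrigPoly

variable {ι : Type*}

noncomputable def torusFlow (ω : ι → ℝ) : AddChar ℝ (ι → Circle) where
  toFun t i := Circle.exp (ω i * t)
  map_zero_eq_one' := by ext; simp
  map_add_eq_mul' s t := by ext i; simp [mul_add, Circle.exp_add]

theorem continuous_torusFlow (ω : ι → ℝ) : Continuous (torusFlow ω) :=
  continuous_pi fun _ => Circle.exp.continuous.comp (continuous_const_mul _)

noncomputable def trigPoly (s : Finset ι) (c : ι → ℂ) (ω : ι → ℝ) (t : ℝ) : ℂ :=
  ∑ i ∈ s, c i * Circle.exp (ω i * t)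

theorem frequently_forall_trigPoly_mem_of_mem_nhds (s : Finset ι) (c : ι → ℂ) (ω : ι → ℝ)
    (t₀ : ℝ) {V : Set ℂ} (hV : V ∈ 𝓝 (trigPoly s c ω t₀)) :
    ∃ ε > 0, ∃ᶠ n : ℕ in atTop, ∀ t, |t - (t₀ + n)| < ε → trigPoly s c ω t ∈ V := by
  let Φ : (ι → Circle) → ℂ := fun z => ∑ i ∈ s, c i * z i
  have hΦ : Continuous Φ := by fun_prop
  exact (torusFlow ω).frequently_forall_mem_of_mem_nhds (continuous_torusFlow ω) t₀
    (hΦ.continuousAt.preimage_mem_nhds hV)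

theorem exists_trigPoly_ne_zero {s : Finset ι} {c : ι → ℂ} {ω : ι → ℝ} (hω : Set.InjOn ω s)
    {i : ι} (hi : i ∈ s) (hc : c i ≠ 0) : ∃ t, trigPoly s c ω t ≠ 0 := by
  by_contra! h
  let χ : s → (Multiplicative ℝ →* ℂ) := fun j =>
    Circle.coeHom.comp ((Pi.evalMonoidHom _ j.1).comp (torusFlow ω).toMonoidHom)
  have hχ : Function.Injective χ := fun j k hjk => Subtype.ext <| hω j.2 k.2 <|
    Circle.eq_of_forall_exp_mul_eq fun t => Circle.coe_inj.mp (DFunLike.congr_fun hjk t)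
  have hsum : ∑ j : s, c j • ⇑(χ j) = 0 := by
    ext t
    simp only [Finset.sum_apply, Pi.smul_apply, smul_eq_mul, Pi.zero_apply]
    exact (Finset.sum_coe_sort s fun j => c j * Circle.exp (ω j * t.toAdd)).trans (h t.toAdd)
  exact hc (Fintype.linearIndependent_iff.mp
    ((linearIndependent_monoidHom (Multiplicative ℝ) ℂ).comp χ hχ) (c ·) hsum ⟨i, hi⟩)

end TrigPoly

theorem Complex.exp_mul_ofReal_eq_mul_circleExp (ξ : ℂ) (t : ℝ) :
    exp (ξ * t) = Real.exp (ξ.re * t) * Circle.exp (ξ.im * t) := by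
  rw [Circle.coe_exp, ofReal_exp, ← exp_add]
  conv_lhs => rw [← re_add_im ξ]
  push_cast
  ring_nf

theorem Complex.isBigO_exp_mul_ofReal (ξ : ℂ) :
    (fun t : ℝ => exp (ξ * t)) =O[atTop] (fun t => Real.exp (ξ.re * t)) :=
  isBigO_of_le _ fun t => by simp [Complex.norm_exp]

namespace Polynomial

theorem isBigO_eval_ofReal (p : ℂ[X]) :
    (fun t : ℝ => p.eval (t : ℂ)) =O[atTop] (fun t => t ^ p.natDegree) := by
  have h := (isBigO_cobounded_of_degree_le (P := p) (Q := X ^ p.natDegree)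
    (by rw [degree_X_pow]; exact degree_le_natDegree)).comp_tendsto
      (RCLike.tendsto_ofReal_atTop_cobounded ℂ)
  exact Complex.isBigO_ofReal_right.mp (by simpa [Function.comp_def] using h)

theorem isLittleO_eval_ofReal_sub_coeff_mul_pow (p : ℂ[X]) {d : ℕ} (hp : p.natDegree ≤ d) :
    (fun t : ℝ => p.eval (t : ℂ) - p.coeff d * (t : ℂ) ^ d) =o[atTop] (fun t => t ^ d) := by
  have hdeg : (p - C (p.coeff d) * X ^ d).degree < (X ^ d : ℂ[X]).degree := by
    rw [degree_X_pow, degree_lt_iff_coeff_zero]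
    intro m hm
    rw [coeff_sub, coeff_C_mul_X_pow]
    split_ifs with hmd
    · rw [hmd, sub_self]
    · rw [coeff_eq_zero_of_natDegree_lt (by omega), sub_zero]
  have h := (isLittleO_cobounded_of_degree_lt hdeg).comp_tendsto
    (RCLike.tendsto_ofReal_atTop_cobounded ℂ)
  exact Complex.isLittleO_ofReal_right.mp (by simpa [Function.comp_def] using h)

end Polynomial

theorem isLittleO_exp_mul_eval_of_re_lt (p : ℂ[X]) {ξ : ℂ} {lam : ℝ} (hξ : ξ.re < lam) (d : ℕ) :
    (fun t : ℝ => Complex.exp (ξ * t) * p.eval (t : ℂ)) =o[atTop]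
      (fun t => Real.exp (lam * t) * t ^ d) := by
  have hpow : (fun t : ℝ => t ^ p.natDegree) =o[atTop] (fun t => Real.exp ((lam - ξ.re) * t)) :=
    isLittleO_pow_exp_pos_mul_atTop _ (sub_pos.mpr hξ)
  have hone : (fun _ : ℝ => (1 : ℝ)) =O[atTop] (fun t : ℝ => t ^ d) :=
    IsBigO.of_bound 1 <| by
      filter_upwards [eventually_ge_atTop 1] with t ht
      simpa [abs_of_nonneg (by positivity : (0:ℝ) ≤ t)] using one_le_pow₀ ht
  have hexp : (fun t => Real.exp (ξ.re * t) * Real.exp ((lam - ξ.re) * t)) =O[atTop]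
      (fun t => Real.exp (lam * t) * t ^ d) :=
    ((isBigO_refl _ _).mul hone).congr_left fun t => by rw [← Real.exp_add, mul_one]; ring_nf
  exact ((Complex.isBigO_exp_mul_ofReal ξ).mul p.isBigO_eval_ofReal).trans_isLittleO
    (((isBigO_refl _ _).mul_isLittleO hpow).trans_isBigO hexp)

theorem isLittleO_exp_mul_eval_sub_of_re_eq (p : ℂ[X]) {d : ℕ} (hp : p.natDegree ≤ d) {ξ : ℂ}
    {lam : ℝ} (hξ : ξ.re = lam) :
    (fun t : ℝ => Complex.exp (ξ * t) * p.eval (t : ℂ) -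
        Real.exp (lam * t) * t ^ d * (p.coeff d * Circle.exp (ξ.im * t))) =o[atTop]
      (fun t => Real.exp (lam * t) * t ^ d) := by
  have h := (Complex.isBigO_exp_mul_ofReal ξ).mul_isLittleO
    (p.isLittleO_eval_ofReal_sub_coeff_mul_pow hp)
  rw [hξ] at h
  refine h.congr_left fun t => ?_
  rw [Complex.exp_mul_ofReal_eq_mul_circleExp, hξ]
  push_cast
  ring

theorem isLittleO_sum_exp_mul_eval_sub_trigPoly (Ξ : Finset ℂ) (q : ℂ → ℂ[X]) {lam : ℝ} {d : ℕ}
    (hlam : ∀ ξ ∈ Ξ, q ξ ≠ 0 → ξ.re ≤ lam)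
    (hd : ∀ ξ ∈ Ξ, q ξ ≠ 0 → ξ.re = lam → (q ξ).natDegree ≤ d) :
    (fun t : ℝ => ∑ ξ ∈ Ξ, Complex.exp (ξ * t) * (q ξ).eval (t : ℂ) -
        Real.exp (lam * t) * t ^ d *
          trigPoly (Ξ.filter (·.re = lam)) (fun ξ => (q ξ).coeff d) Complex.im t) =o[atTop]
      (fun t => Real.exp (lam * t) * t ^ d) := by
  have hterm : ∀ ξ ∈ Ξ, (fun t : ℝ => Complex.exp (ξ * t) * (q ξ).eval (t : ℂ) -
      if ξ.re = lam then Real.exp (lam * t) * t ^ d * ((q ξ).coeff d * Circle.exp (ξ.im * t))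
      else 0) =o[atTop] (fun t => Real.exp (lam * t) * t ^ d) := by
    intro ξ hξ
    by_cases hre : ξ.re = lam
    · have hdeg : (q ξ).natDegree ≤ d := by
        by_cases hq : q ξ = 0
        · simp [hq]
        · exact hd ξ hξ hq hre
      simpa only [if_pos hre] using isLittleO_exp_mul_eval_sub_of_re_eq (q ξ) hdeg hre
    · simp only [if_neg hre, sub_zero]
      by_cases hq : q ξ = 0
      · simp [hq]
      · exact isLittleO_exp_mul_eval_of_re_lt (q ξ) (lt_of_le_of_ne (hlam ξ hξ hq) hre) d
  refine (IsLittleO.sum hterm).congr_left fun t => ?_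
  rw [Finset.sum_apply, trigPoly, Finset.sum_filter, Finset.mul_sum, ← Finset.sum_sub_distrib]
  refine Finset.sum_congr rfl fun ξ _ => ?_
  split_ifs <;> simp

theorem exists_strictMono_tendsto_of_frequently_forall_near {P Q : ℝ → Prop} {t₀ ε : ℝ}
    (hP : ∃ᶠ n : ℕ in atTop, ∀ t, |t - (t₀ + n)| < ε → P t) (hQ : ∀ᶠ t in atTop, Q t) :
    ∃ tseq : ℕ → ℝ, StrictMono tseq ∧ Tendsto tseq atTop atTop ∧
      ∀ n t, |t - tseq n| < ε → P t ∧ Q t := by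
  obtain ⟨T, hT⟩ := eventually_atTop.mp hQ
  have hlarge : ∀ᶠ n : ℕ in atTop, ∀ t, |t - (t₀ + n)| < ε → Q t := by
    filter_upwards [tendsto_natCast_atTop_atTop.eventually_ge_atTop (T + ε - t₀)] with n hn t ht
    exact hT t (by linarith [(abs_lt.mp ht).1])
  obtain ⟨φ, hφ, hPQ⟩ := extraction_of_frequently_atTop (hP.and_eventually hlarge)
  exact ⟨fun n => t₀ + φ n, fun m n hmn => by simpa using hφ hmn,
    tendsto_atTop_add_const_left _ t₀ (tendsto_natCast_atTop_atTop.comp hφ.tendsto_atTop),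
    fun n t ht => ⟨(hPQ n).1 t ht, (hPQ n).2 t ht⟩⟩

theorem le_norm_of_norm_sub_ofReal_mul_le {x y : ℂ} {r c : ℝ} (hr : 0 ≤ r) (hy : 2 * c ≤ ‖y‖)
    (hxy : ‖x - r * y‖ ≤ c * r) : c * r ≤ ‖x‖ := by
  have h := norm_sub_norm_le (r * y) x
  rw [norm_sub_rev, norm_mul, Complex.norm_of_nonneg hr] at h
  nlinarith

theorem stmt11_general (Ξ : Finset ℂ) (q : ℂ → Polynomial ℂ) (lam : ℝ) (d : ℕ)
    (hlam₂ : ∀ ξ ∈ Ξ, q ξ ≠ 0 → ξ.re ≤ lam)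
    (hd₁ : ∃ ξ ∈ Ξ, q ξ ≠ 0 ∧ ξ.re = lam ∧ (q ξ).natDegree = d)
    (hd₂ : ∀ ξ ∈ Ξ, q ξ ≠ 0 → ξ.re = lam → (q ξ).natDegree ≤ d) :
    ∃ C > (0:ℝ), ∃ ε > (0:ℝ), ∃ tseq : ℕ → ℝ, StrictMono tseq ∧
      Filter.Tendsto tseq Filter.atTop Filter.atTop ∧
      ∀ n : ℕ, ∀ t : ℝ, |t - tseq n| < ε →
        C * Real.exp (lam * t) * t ^ d ≤
          ‖∑ ξ ∈ Ξ, Complex.exp (ξ * t) * (q ξ).eval (t : ℂ)‖ := by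
  obtain ⟨ξ₁, hξ₁, hq₁, hre₁, hdeg₁⟩ := hd₁
  set h := trigPoly (Ξ.filter (·.re = lam)) (fun ξ => (q ξ).coeff d) Complex.im
  have him : Set.InjOn Complex.im (Ξ.filter (·.re = lam)) := fun ξ hξ ζ hζ hξζ =>
    Complex.ext ((Finset.mem_filter.mp hξ).2.trans (Finset.mem_filter.mp hζ).2.symm) hξζ
  obtain ⟨t₀, ht₀⟩ : ∃ t₀, h t₀ ≠ 0 :=
    exists_trigPoly_ne_zero him (Finset.mem_filter.mpr ⟨hξ₁, hre₁⟩)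
      (by rwa [← hdeg₁, coeff_natDegree, leadingCoeff_ne_zero])
  set a := ‖h t₀‖
  have ha : 0 < a := norm_pos_iff.mpr ht₀
  obtain ⟨ε, hε, hreturn⟩ := frequently_forall_trigPoly_mem_of_mem_nhds _ _ _ t₀
    ((isOpen_lt continuous_const continuous_norm).mem_nhds (half_lt_self ha))
  have hlarge := (eventually_ge_atTop 0).and
    ((isLittleO_sum_exp_mul_eval_sub_trigPoly Ξ q hlam₂ hd₂).def (by positivity : 0 < a / 4))
  obtain ⟨tseq, hmono, htends, hgood⟩ :=
    exists_strictMono_tendsto_of_frequently_forall_near hreturn hlarge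
  refine ⟨a / 4, by positivity, ε, hε, tseq, hmono, htends, fun n t ht => ?_⟩
  obtain ⟨hh, ht_nonneg, hclose⟩ := hgood n t ht
  have hE : 0 ≤ Real.exp (lam * t) * t ^ d := by positivity
  rw [Real.norm_of_nonneg hE] at hclose
  rw [mul_assoc]
  exact le_norm_of_norm_sub_ofReal_mul_le (y := h t) hE
    (by linarith [show a / 2 < ‖h t‖ from hh]) (by exact_mod_cast hclose)

/-- Lower bound for an exponential polynomial `f(t) = Σ_{ξ ∈ Ξ} e^{ξ t} q_ξ(t)`:
with `λ = max {Re ξ : q_ξ ≠ 0}` and `d` the maximal degree of `q_ξ` among `ξ` with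
`Re ξ = λ`, there exist `C > 0`, `ε > 0` and a strictly increasing sequence `t_n → ∞`
with `|f(t)| ≥ C e^{λ t} t^d` for all `t ∈ (t_n − ε, t_n + ε)` and all `n`. -/
theorem stmt11 (Ξ : Finset ℂ) (q : ℂ → Polynomial ℂ) (lam : ℝ) (d : ℕ)
    (hlam₁ : ∃ ξ ∈ Ξ, q ξ ≠ 0 ∧ ξ.re = lam)
    (hlam₂ : ∀ ξ ∈ Ξ, q ξ ≠ 0 → ξ.re ≤ lam)
    (hd₁ : ∃ ξ ∈ Ξ, q ξ ≠ 0 ∧ ξ.re = lam ∧ (q ξ).natDegree = d)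
    (hd₂ : ∀ ξ ∈ Ξ, q ξ ≠ 0 → ξ.re = lam → (q ξ).natDegree ≤ d) :
    ∃ C > (0:ℝ), ∃ ε > (0:ℝ), ∃ tseq : ℕ → ℝ, StrictMono tseq ∧
      Filter.Tendsto tseq Filter.atTop Filter.atTop ∧
      ∀ n : ℕ, ∀ t : ℝ, |t - tseq n| < ε →
        C * Real.exp (lam * t) * t ^ d ≤
          ‖∑ ξ ∈ Ξ, Complex.exp (ξ * t) * (q ξ).eval (t : ℂ)‖ :=
  stmt11_general Ξ q lam d hlam₂ hd₁ hd₂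
end
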